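/- For an n×m data matrix X with K = 1 group and group-mean matrix X̄ = X 𝟙/m (replicated: X̄_full = X C_m), the extended matrix X̃(a,b) = (a^{-1/2}(X − X C_m), (m/b)^{1/2} X 𝟙/m) satisfies (1/n) X̃(λ₁,μ₁)ᵀ X̃(λ₁,μ₁) having the property that for α̃ related to α by α = Ũ S̃⁻¹ α̃ with Ũ = (I − C_m, 𝟙/√m) and S̃ = diag(√λ₁ I_m, √μ₁): αᵀ((1/n)XᵀX + λ₁(I−C_m) + μ₁C_m)α = α̃ᵀ((1/n)X̃ᵀX̃ + I)α̃, for λ₁, μ₁ > 0. -/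

import Mathlib

open Matrix

/-- The `m × m` averaging matrix `C_m = (1/m)𝟙𝟙ᵀ`. -/
noncomputable def Cavg (m : ℕ) : Matrix (Fin m) (Fin m) ℝ := Matrix.of fun _ _ => (m : ℝ)⁻¹

/-- `Ũ = (I − C_m, 𝟙/√m) ∈ ℝ^{m×(m+1)}` (column index type `Fin m ⊕ Fin 1`). -/
noncomputable def Utilde (m : ℕ) : Matrix (Fin m) (Fin m ⊕ Fin 1) ℝ :=
  Matrix.fromCols ((1 : Matrix (Fin m) (Fin m) ℝ) - Cavg m)
    (Matrix.of fun (_ : Fin m) (_ : Fin 1) => (Real.sqrt m)⁻¹)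

/-- `S̃ = diag(√λ₁ I_m, √μ₁)`. -/
noncomputable def Stilde (m : ℕ) (l1 m1 : ℝ) : Matrix (Fin m ⊕ Fin 1) (Fin m ⊕ Fin 1) ℝ :=
  Matrix.fromBlocks (Real.sqrt l1 • (1 : Matrix (Fin m) (Fin m) ℝ)) 0 0
    (Real.sqrt m1 • (1 : Matrix (Fin 1) (Fin 1) ℝ))

/-- The extended feature matrix
`X̃(a,b) = (a^{-1/2}(X − X C_m), (m/b)^{1/2} X𝟙/m)`. -/
noncomputable def Xext (n m : ℕ) (X : Matrix (Fin n) (Fin m) ℝ) (a b : ℝ) :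
    Matrix (Fin n) (Fin m ⊕ Fin 1) ℝ :=
  Matrix.fromCols ((Real.sqrt a)⁻¹ • (X * ((1 : Matrix (Fin m) (Fin m) ℝ) - Cavg m)))
    (Matrix.of fun (i : Fin n) (_ : Fin 1) =>
      Real.sqrt ((m : ℝ) / b) * ((∑ j, X i j) / m))


/-!
With `α̃ = S̃ Ũᵀ α` the two quadratic forms match term by term. Since `X̃(λ₁, μ₁) = X Ũ S̃⁻¹`
and `Ũ Ũᵀ = (I − C_m) + C_m = I` (the centering matrix `I − C_m` and `C_m` are complementary
orthogonal projections), `X̃ α̃ = X α`; and `‖α̃‖² = αᵀ Ũ S̃² Ũᵀ α = αᵀ(λ₁(I − C_m) + μ₁C_m)α`.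
-/

lemma dotProduct_transpose_mul_self_mulVec {R p q : Type*} [CommSemiring R] [Fintype p]
    [Fintype q] (A : Matrix p q R) (v : q → R) :
    v ⬝ᵥ ((Aᵀ * A) *ᵥ v) = (A *ᵥ v) ⬝ᵥ (A *ᵥ v) := by
  rw [← mulVec_mulVec, dotProduct_mulVec, vecMul_transpose]

lemma dotProduct_mulVec_smul_gram_add {n k m : Type*} [Fintype n] [Fintype k] [DecidableEq k]
    [Fintype m] (c : ℝ) (A : Matrix n k ℝ) (X : Matrix n m ℝ) (T : Matrix k m ℝ)
    (hAT : A * T = X) (v : m → ℝ) :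
    (T *ᵥ v) ⬝ᵥ ((c • (Aᵀ * A) + 1) *ᵥ (T *ᵥ v)) = v ⬝ᵥ ((c • (Xᵀ * X) + Tᵀ * T) *ᵥ v) := by
  simp only [add_mulVec, smul_mulVec, one_mulVec, dotProduct_add, dotProduct_smul,
    dotProduct_transpose_mul_self_mulVec]
  rw [mulVec_mulVec, hAT]

section

variable {m : ℕ}

lemma isIdempotentElem_Cavg (hm : m ≠ 0) : IsIdempotentElem (Cavg m) := by
  ext i j
  simp [Cavg, mul_apply, hm]

lemma transpose_Cavg : (Cavg m)ᵀ = Cavg m := rfl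

lemma Utilde_mul_fromBlocks_mul_transpose (hm : m ≠ 0) (a b : ℝ) :
    Utilde m * fromBlocks (a • (1 : Matrix (Fin m) (Fin m) ℝ)) 0 0
        (b • (1 : Matrix (Fin 1) (Fin 1) ℝ)) * (Utilde m)ᵀ =
      a • (1 - Cavg m) + b • Cavg m := by
  have hP : (1 - Cavg m) * (1 - Cavg m) = 1 - Cavg m := (isIdempotentElem_Cavg hm).one_sub
  have hu : of (fun (_ : Fin m) (_ : Fin 1) => (√(m : ℝ))⁻¹) *
      (of fun (_ : Fin m) (_ : Fin 1) => (√(m : ℝ))⁻¹)ᵀ = Cavg m := by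
    ext i j
    simp [Cavg, mul_apply, ← mul_inv]
  rw [Utilde, transpose_fromCols, transpose_sub, transpose_one, transpose_Cavg,
    fromCols_mul_fromBlocks, fromCols_mul_fromRows]
  simp only [Matrix.mul_zero, Matrix.mul_smul, Matrix.mul_one, add_zero, zero_add,
    Matrix.smul_mul, hP, hu]

lemma Utilde_mul_transpose (hm : m ≠ 0) : Utilde m * (Utilde m)ᵀ = 1 := by
  simpa [fromBlocks_one] using Utilde_mul_fromBlocks_mul_transpose hm 1 1

lemma transpose_Stilde (a b : ℝ) : (Stilde m a b)ᵀ = Stilde m a b := by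
  simp [Stilde, fromBlocks_transpose]

lemma Stilde_mul_Stilde (a b c d : ℝ) :
    Stilde m a b * Stilde m c d = fromBlocks ((√a * √c) • 1) 0 0 ((√b * √d) • 1) := by
  simp [Stilde, fromBlocks_multiply, smul_smul, mul_comm]

lemma Stilde_mul_Stilde_inv_inv {a b : ℝ} (ha : 0 < a) (hb : 0 < b) :
    Stilde m a b * Stilde m a⁻¹ b⁻¹ = 1 := by
  rw [Stilde_mul_Stilde, Real.sqrt_inv, Real.sqrt_inv, mul_inv_cancel₀ (Real.sqrt_pos.2 ha).ne',
    mul_inv_cancel₀ (Real.sqrt_pos.2 hb).ne', one_smul, one_smul, fromBlocks_one]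

lemma Stilde_inv {a b : ℝ} (ha : 0 < a) (hb : 0 < b) : (Stilde m a b)⁻¹ = Stilde m a⁻¹ b⁻¹ :=
  inv_eq_right_inv (Stilde_mul_Stilde_inv_inv ha hb)

lemma Stilde_inv_mul_self {a b : ℝ} (ha : 0 < a) (hb : 0 < b) :
    (Stilde m a b)⁻¹ * Stilde m a b = 1 :=
  nonsing_inv_mul _ (isUnit_det_of_right_inverse (Stilde_mul_Stilde_inv_inv ha hb))

lemma Xext_eq_mul_Utilde_mul_Stilde {n : ℕ} (X : Matrix (Fin n) (Fin m) ℝ) (a b : ℝ) :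
    Xext n m X a b = X * Utilde m * Stilde m a⁻¹ b⁻¹ := by
  rw [Utilde, mul_fromCols, Stilde, fromCols_mul_fromBlocks]
  ext i (j | j)
  · simp [Xext, Real.sqrt_inv]
  · simp [Xext, mul_apply, ← Finset.sum_mul, Real.sqrt_div (Nat.cast_nonneg (α := ℝ) m),
      Real.sqrt_inv]
    rw [inv_eq_one_div (√(m : ℝ)), ← Real.sqrt_div_self']
    ring

end

theorem grcca_to_rcca_extension_general (n m : ℕ) (hm : 0 < m)
    (l1 m1 : ℝ) (hl1 : 0 < l1) (hm1 : 0 < m1)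
    (X : Matrix (Fin n) (Fin m) ℝ) (α : Fin m → ℝ) :
    α = (Utilde m * (Stilde m l1 m1)⁻¹) *ᵥ (Stilde m l1 m1 *ᵥ ((Utilde m)ᵀ *ᵥ α)) ∧
    α ⬝ᵥ (((n : ℝ)⁻¹ • (Xᵀ * X) +
        l1 • ((1 : Matrix (Fin m) (Fin m) ℝ) - Cavg m) + m1 • Cavg m) *ᵥ α) =
      (Stilde m l1 m1 *ᵥ ((Utilde m)ᵀ *ᵥ α)) ⬝ᵥ
        (((n : ℝ)⁻¹ • ((Xext n m X l1 m1)ᵀ * Xext n m X l1 m1) + 1) *ᵥ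
          (Stilde m l1 m1 *ᵥ ((Utilde m)ᵀ *ᵥ α))) := by
  have hT : (Stilde m l1 m1 * (Utilde m)ᵀ)ᵀ * (Stilde m l1 m1 * (Utilde m)ᵀ) =
      l1 • (1 - Cavg m) + m1 • Cavg m := by
    rw [transpose_mul, transpose_transpose, transpose_Stilde, Matrix.mul_assoc,
      ← Matrix.mul_assoc (Stilde m l1 m1), Stilde_mul_Stilde, Real.mul_self_sqrt hl1.le,
      Real.mul_self_sqrt hm1.le, ← Matrix.mul_assoc, Utilde_mul_fromBlocks_mul_transpose hm.ne']
  have hXT : Xext n m X l1 m1 * (Stilde m l1 m1 * (Utilde m)ᵀ) = X := by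
    rw [Xext_eq_mul_Utilde_mul_Stilde, ← Stilde_inv hl1 hm1, Matrix.mul_assoc,
      ← Matrix.mul_assoc _ (Stilde m l1 m1), Stilde_inv_mul_self hl1 hm1, Matrix.one_mul,
      Matrix.mul_assoc, Utilde_mul_transpose hm.ne', Matrix.mul_one]
  refine ⟨?_, ?_⟩
  · rw [mulVec_mulVec, mulVec_mulVec, Matrix.mul_assoc (Utilde m), Stilde_inv_mul_self hl1 hm1,
      Matrix.mul_one, Utilde_mul_transpose hm.ne', one_mulVec]
  · rw [mulVec_mulVec, dotProduct_mulVec_smul_gram_add _ _ _ _ hXT, hT, add_assoc]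

/-- GRCCA-to-RCCA feature extension with one group (`K = 1`): for
`α̃ = S̃ Ũᵀ α` (equivalently `α = Ũ S̃⁻¹ α̃`),
`αᵀ((1/n)XᵀX + λ₁(I−C_m) + μ₁C_m)α = α̃ᵀ((1/n)X̃(λ₁,μ₁)ᵀX̃(λ₁,μ₁) + I)α̃`. -/
theorem grcca_to_rcca_extension (n m : ℕ) (hn : 0 < n) (hm : 0 < m)
    (l1 m1 : ℝ) (hl1 : 0 < l1) (hm1 : 0 < m1)
    (X : Matrix (Fin n) (Fin m) ℝ) (α : Fin m → ℝ) :
    α = (Utilde m * (Stilde m l1 m1)⁻¹) *ᵥ (Stilde m l1 m1 *ᵥ ((Utilde m)ᵀ *ᵥ α)) ∧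
    α ⬝ᵥ (((n : ℝ)⁻¹ • (Xᵀ * X) +
        l1 • ((1 : Matrix (Fin m) (Fin m) ℝ) - Cavg m) + m1 • Cavg m) *ᵥ α) =
      (Stilde m l1 m1 *ᵥ ((Utilde m)ᵀ *ᵥ α)) ⬝ᵥ
        (((n : ℝ)⁻¹ • ((Xext n m X l1 m1)ᵀ * Xext n m X l1 m1) + 1) *ᵥ
          (Stilde m l1 m1 *ᵥ ((Utilde m)ᵀ *ᵥ α))) :=
  grcca_to_rcca_extension_general n m hm l1 m1 hl1 hm1 X α
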